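/- arXiv:2101.06544 — 9 statements merged into one kernel-verified Lean document; each statement's English description precedes it below -/
import Mathlib

section
/- Let r : (u₁, u₂) → ℝ be a positive solution of ṙ(u) = -(1/2)(1 - 2M(u)/r(u)), and suppose M is differentiable with M'(u) < 0 for all u ∈ (u₁, u₂). If r(u₀) ≥ 2M(u₀) for some u₀ ∈ (u₁, u₂), then r(u) > 2M(u) for all u ∈ (u₀, u₂). -/
open Set Filter Topology

/-- barrier lemma. If `M' < 0` on `(u₁,u₂)` and a positive solution of the
null geodesic ODE satisfies `r(u₀) ≥ 2M(u₀)` at some `u₀ ∈ (u₁,u₂)`, then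
`r(u) > 2M(u)` for all `u ∈ (u₀,u₂)`. -/
theorem stmt1 (M r : ℝ → ℝ) (u₁ u₂ u₀ : ℝ)
    (hM : Differentiable ℝ M)
    (hM' : ∀ u ∈ Ioo u₁ u₂, deriv M u < 0)
    (hpos : ∀ u ∈ Ioo u₁ u₂, 0 < r u)
    (hode : ∀ u ∈ Ioo u₁ u₂, HasDerivAt r (-(1/2) * (1 - 2 * M u / r u)) u)
    (hu₀ : u₀ ∈ Ioo u₁ u₂)
    (hinit : r u₀ ≥ 2 * M u₀) :
    ∀ u ∈ Ioo u₀ u₂, r u > 2 * M u := by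
  set f : ℝ → ℝ := fun t => r t - 2 * M t with hf
  have hfd : ∀ t ∈ Ioo u₁ u₂,
      HasDerivAt f (-(1/2) * (1 - 2 * M t / r t) - 2 * deriv M t) t := by
    intro t ht
    exact (hode t ht).sub (((hM t).hasDerivAt).const_mul 2)
  have hkey : ∀ t ∈ Ioo u₁ u₂, f t = 0 →
      HasDerivAt f (-2 * deriv M t) t ∧ 0 < -2 * deriv M t := by
    intro t ht h0
    have hr : r t = 2 * M t := by
      have : r t - 2 * M t = 0 := h0
      linarith
    have hrpos := hpos t ht
    have hdiv : 2 * M t / r t = 1 := by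
      rw [← hr]; field_simp
    refine ⟨?_, by nlinarith [hM' t ht]⟩
    have h := hfd t ht
    have e : -(1/2) * (1 - 2 * M t / r t) - 2 * deriv M t = -2 * deriv M t := by
      rw [hdiv]; ring
    rwa [e] at h
  -- core contradiction: no point in (u₀, u₂) can have f < 0
  have core : ∀ v ∈ Ioo u₀ u₂, f v < 0 → False := by
    intro v hv hfv
    have hsub : Icc u₀ v ⊆ Ioo u₁ u₂ := fun t ht =>
      ⟨lt_of_lt_of_le hu₀.1 ht.1, lt_of_le_of_lt ht.2 hv.2⟩
    set S : Set ℝ := {t ∈ Icc u₀ v | 0 ≤ f t} with hS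
    have hu₀v : u₀ ≤ v := hv.1.le
    have hne : S.Nonempty := ⟨u₀, ⟨le_refl _, hu₀v⟩, by
      show (0:ℝ) ≤ r u₀ - 2 * M u₀; linarith⟩
    have hbdd : BddAbove S := ⟨v, fun t ht => ht.1.2⟩
    have hc : ContinuousOn f (Icc u₀ v) := fun t ht =>
      ((hfd t (hsub ht)).continuousAt).continuousWithinAt
    have hclosed : IsClosed S := by
      have : S = Icc u₀ v ∩ f ⁻¹' Ici 0 := by
        ext t; simp [hS, and_comm]
      rw [this]
      exact hc.preimage_isClosed_of_isClosed isClosed_Icc isClosed_Ici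
    set s := sSup S with hs
    have hsS : s ∈ S := hclosed.csSup_mem hne hbdd
    have hsIcc : s ∈ Icc u₀ v := hsS.1
    have hfs0 : 0 ≤ f s := hsS.2
    have hsv : s < v := lt_of_le_of_ne hsIcc.2 (by intro h; rw [h] at hfs0; linarith)
    have hneg : ∀ t ∈ Ioc s v, f t < 0 := by
      intro t ht
      by_contra h
      push_neg at h
      have : t ∈ S := ⟨⟨hsIcc.1.trans ht.1.le, ht.2⟩, h⟩
      exact absurd (le_csSup hbdd this) (not_le.mpr ht.1)
    have hsmem : s ∈ Ioo u₁ u₂ := hsub ⟨hsIcc.1, hsIcc.2⟩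
    -- f s ≤ 0 by continuity from the right
    have hfs_le : f s ≤ 0 := by
      have hcont : ContinuousAt f s := (hfd s hsmem).continuousAt
      have htend : Tendsto f (𝓝[>] s) (𝓝 (f s)) :=
        hcont.continuousWithinAt.tendsto
      have hev : ∀ᶠ t in 𝓝[>] s, f t ≤ 0 := by
        filter_upwards [Ioc_mem_nhdsGT_of_mem ⟨le_refl s, hsv⟩] with t ht
        exact (hneg t ht).le
      exact le_of_tendsto htend hev
    have hfs : f s = 0 := le_antisymm hfs_le hfs0
    obtain ⟨hder, hdpos⟩ := hkey s hsmem hfs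
    have hslope : Tendsto (slope f s) (𝓝[≠] s) (𝓝 (-2 * deriv M s)) :=
      hasDerivAt_iff_tendsto_slope.mp hder
    have hev : ∀ᶠ t in 𝓝[≠] s, 0 < slope f s t :=
      hslope.eventually (eventually_gt_nhds hdpos)
    have hev' : ∀ᶠ t in 𝓝[>] s, 0 < slope f s t :=
      hev.filter_mono (nhdsWithin_mono s (fun x hx => ne_of_gt hx))
    have hmem : Ioc s v ∈ 𝓝[>] s := Ioc_mem_nhdsGT_of_mem ⟨le_refl s, hsv⟩
    obtain ⟨t, hts, htmem⟩ := (hev'.and (eventually_of_mem hmem (fun x hx => hx))).exists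
    have hslope_eq : slope f s t = (f t - f s) / (t - s) := slope_def_field f s t
    have h1 : 0 < t - s := sub_pos.mpr htmem.1
    have h2 : f t - f s = slope f s t * (t - s) := by
      rw [hslope_eq, div_mul_cancel₀ _ (show t - s ≠ 0 by linarith)]
    have : 0 < f t := by nlinarith [hneg t htmem]
    linarith [hneg t htmem]
  intro u hu
  by_contra h
  push_neg at h
  have hu' : u ∈ Ioo u₁ u₂ := ⟨hu₀.1.trans hu.1, hu.2⟩
  have hfu : f u ≤ 0 := by show r u - 2 * M u ≤ 0; linarith
  rcases lt_or_eq_of_le hfu with hlt | heq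
  · exact core u hu hlt
  · obtain ⟨hder, hdpos⟩ := hkey u hu' heq
    have hslope : Tendsto (slope f u) (𝓝[≠] u) (𝓝 (-2 * deriv M u)) :=
      hasDerivAt_iff_tendsto_slope.mp hder
    have hev : ∀ᶠ t in 𝓝[≠] u, 0 < slope f u t :=
      hslope.eventually (eventually_gt_nhds hdpos)
    have hev' : ∀ᶠ t in 𝓝[<] u, 0 < slope f u t :=
      hev.filter_mono (nhdsWithin_mono u (fun x hx => ne_of_lt hx))
    have hmem : Ioo u₀ u ∈ 𝓝[<] u := Ioo_mem_nhdsLT_of_mem ⟨hu.1, le_refl u⟩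
    obtain ⟨t, hts, htmem⟩ := (hev'.and (eventually_of_mem hmem (fun x hx => hx))).exists
    have hslope_eq : slope f u t = (f t - f u) / (t - u) := slope_def_field f u t
    have h1 : t - u < 0 := sub_neg.mpr htmem.2
    have h2 : f t - f u = slope f u t * (t - u) := by
      rw [hslope_eq, div_mul_cancel₀ _ (show t - u ≠ 0 by linarith)]
    have hft : f t < 0 := by nlinarith
    exact core t ⟨htmem.1, htmem.2.trans hu.2⟩ hft
end

section
/- Suppose r₁ and r₂ are two solutions of ṙ(u) = -(1/2)(1 - 2M(u)/r(u)) defined on an interval (-∞, u₀), both positive września bounded, with lim_{u→-∞} r₁(u) = lim_{u→-∞} r₂(u) = 2M₋ > 0, where M(u) → M₋ as u → -∞. Then r₁ = r₂ on (-∞, u₀). -/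
open Set Filter

/-- uniqueness of the past event horizon. Two positive bounded solutions of
the null geodesic ODE on `(-∞, u₀)` both tending to `2Mminus > 0` at `-∞` coincide. -/
theorem stmt2 (M r₁ r₂ : ℝ → ℝ) (u₀ Mminus : ℝ)
    (hM : ContDiff ℝ (⊤ : ℕ∞) M) (hMmono : Antitone M)
    (hMlim : Tendsto M atBot (nhds Mminus)) (hMminus : 0 < Mminus)
    (hpos₁ : ∀ u ∈ Iio u₀, 0 < r₁ u) (hpos₂ : ∀ u ∈ Iio u₀, 0 < r₂ u)
    (hbd₁ : ∃ C, ∀ u ∈ Iio u₀, r₁ u ≤ C) (hbd₂ : ∃ C, ∀ u ∈ Iio u₀, r₂ u ≤ C)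
    (hode₁ : ∀ u ∈ Iio u₀, HasDerivAt r₁ (-(1/2) * (1 - 2 * M u / r₁ u)) u)
    (hode₂ : ∀ u ∈ Iio u₀, HasDerivAt r₂ (-(1/2) * (1 - 2 * M u / r₂ u)) u)
    (hlim₁ : Tendsto r₁ atBot (nhds (2 * Mminus)))
    (hlim₂ : Tendsto r₂ atBot (nhds (2 * Mminus))) :
    ∀ u ∈ Iio u₀, r₁ u = r₂ u := by
  -- Choose u₁ < u₀ with good bounds on (-∞, u₁]
  have hMev : ∀ᶠ u in atBot, Mminus / 2 < M u :=
    hMlim.eventually_const_lt (by linarith)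
  obtain ⟨a, ha⟩ := (hMev.and ((hlim₁.eventually_const_lt (by linarith :
      Mminus < 2 * Mminus)).and (hlim₂.eventually_const_lt (by linarith :
      Mminus < 2 * Mminus)))).exists_forall_of_atBot
  set u₁ : ℝ := min a (u₀ - 1) with hu₁def
  have hu₁lt : u₁ < u₀ := lt_of_le_of_lt (min_le_right _ _) (by linarith)
  have hmem : ∀ u ≤ u₁, u ∈ Iio u₀ := fun u hu => lt_of_le_of_lt hu hu₁lt
  have hbnds : ∀ u ≤ u₁, Mminus / 2 < M u ∧ Mminus < r₁ u ∧ Mminus < r₂ u :=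
    fun u hu => ha u (le_trans hu (min_le_left _ _))
  set g : ℝ → ℝ := fun u => r₂ u - r₁ u with hgdef
  set c : ℝ → ℝ := fun u => M u / (r₁ u * r₂ u) with hcdef
  have hg' : ∀ u ∈ Iio u₀, HasDerivAt g (-(c u) * g u) u := by
    intro u hu
    have h1 := hpos₁ u hu; have h2 := hpos₂ u hu
    have := (hode₂ u hu).sub (hode₁ u hu)
    convert this using 1
    · rfl
    · rfl
    · rfl
    simp only [hcdef, hgdef]
    field_simp
    ring
  -- squared difference
  have hh' : ∀ u ∈ Iio u₀, HasDerivAt (fun u => g u ^ 2) (-(2 * c u) * g u ^ 2) u := by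
    intro u hu
    have := (hg' u hu).pow 2
    convert this using 1
    · rfl
    · rfl
    · rfl
    ring
  have hcont : ∀ u ∈ Iio u₀, ContinuousAt g u := fun u hu => (hg' u hu).continuousAt
  -- limit of g at -∞
  have hg0 : Tendsto g atBot (nhds 0) := by
    have := hlim₂.sub hlim₁
    simpa using this
  have hh0 : Tendsto (fun u => g u ^ 2) atBot (nhds 0) := by
    simpa using hg0.pow 2
  -- Part A : g = 0 on (-∞, u₁]
  have hzero : ∀ u ≤ u₁, g u = 0 := by
    have hanti : AntitoneOn (fun u => g u ^ 2) (Iic u₁) := by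
      apply antitoneOn_of_hasDerivWithinAt_nonpos (convex_Iic u₁)
        (f' := fun u => -(2 * c u) * g u ^ 2)
      · intro x hx
        exact ((hcont x (hmem x hx)).pow 2).continuousWithinAt
      · intro x hx
        rw [interior_Iic] at hx
        exact (hh' x (hmem x hx.le)).hasDerivWithinAt
      · intro x hx
        rw [interior_Iic] at hx
        obtain ⟨hMx, hr1, hr2⟩ := hbnds x hx.le
        have hc : 0 ≤ c x :=
          div_nonneg (by linarith) (by nlinarith)
        have : 0 ≤ g x ^ 2 := sq_nonneg _
        nlinarith
    intro u hu
    have hle : (fun u => g u ^ 2) u ≤ 0 := by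
      apply ge_of_tendsto hh0
      filter_upwards [eventually_le_atBot u] with v hv
      exact hanti (le_trans hv hu) hu hv
    have := sq_nonneg (g u)
    have : g u ^ 2 = 0 := le_antisymm hle (sq_nonneg _)
    exact pow_eq_zero_iff (by norm_num) |>.mp this
  -- Part B : Gronwall forward from u₁
  intro u hu
  rcases le_or_gt u u₁ with h | h
  · exact (sub_eq_zero.mp (hzero u h)).symm
  · have hsub : Icc u₁ u ⊆ Iio u₀ := fun x hx => lt_of_le_of_lt hx.2 hu
    -- bound on |c| on the compact interval
    have hccont : ContinuousOn c (Icc u₁ u) := by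
      intro x hx
      have hx' := hsub hx
      have h1 := (hpos₁ x hx').ne'
      have h2 := (hpos₂ x hx').ne'
      exact ((hM.continuous.continuousAt.div
        (((hode₁ x hx').continuousAt.mul (hode₂ x hx').continuousAt))
        (mul_ne_zero h1 h2)).continuousWithinAt)
    obtain ⟨K, hK⟩ := isCompact_Icc.exists_bound_of_continuousOn hccont
    have key := norm_le_gronwallBound_of_norm_deriv_right_le (f := g)
      (f' := fun t => -(c t) * g t) (δ := 0) (K := K) (ε := 0) (a := u₁) (b := u)
      (fun x hx => (hcont x (hsub hx)).continuousWithinAt)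
      (fun x hx => (hg' x (hsub ⟨hx.1, hx.2.le⟩)).hasDerivWithinAt)
      (by simp [hzero u₁ le_rfl])
      (by
        intro x hx
        have hx' : x ∈ Icc u₁ u := ⟨hx.1, hx.2.le⟩
        have := hK x hx'
        rw [norm_mul, norm_neg]
        have h0 : ‖g x‖ ≥ 0 := norm_nonneg _
        nlinarith [norm_nonneg (c x)])
      u ⟨h.le, le_rfl⟩
    rw [gronwallBound_ε0_δ0] at key
    exact (sub_eq_zero.mp (norm_le_zero_iff.mp key)).symm
end

section
/- If a solution r of ṙ(u) = -(1/2)(1 - 2M(u)/r(u)) is defined on an interval (-∞, u₀), is positive, and has a finite positive limit l as u → -∞, then l = 2M₋, where M₋ = lim_{u→-∞} M(u). -/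
open Set Filter

/-- a positive solution of the null geodesic ODE on `(-∞, u₀)` with a
finite positive limit `l` at `-∞` must have `l = 2M₋`. -/
theorem stmt3 (M r : ℝ → ℝ) (u₀ Mminus l : ℝ)
    (hM : ContDiff ℝ (⊤ : ℕ∞) M)
    (hMlim : Tendsto M atBot (nhds Mminus)) (hMminus : 0 < Mminus)
    (hpos : ∀ u ∈ Iio u₀, 0 < r u)
    (hode : ∀ u ∈ Iio u₀, HasDerivAt r (-(1/2) * (1 - 2 * M u / r u)) u)
    (hl : 0 < l) (hlim : Tendsto r atBot (nhds l)) :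
    l = 2 * Mminus := by
  set f : ℝ → ℝ := fun u => -(1/2) * (1 - 2 * M u / r u) with hf
  set c : ℝ := -(1/2) * (1 - 2 * Mminus / l) with hc
  -- the derivative tends to c at -∞
  have hfc : Tendsto f atBot (nhds c) := by
    apply tendsto_const_nhds.mul
    exact tendsto_const_nhds.sub (((tendsto_const_nhds.mul hMlim)).div hlim hl.ne')
  -- the difference r u - r (u - 1) tends to 0
  have hdiff0 : Tendsto (fun u => r u - r (u - 1)) atBot (nhds 0) := by
    have h1 : Tendsto (fun u : ℝ => u - 1) atBot atBot :=
      tendsto_atBot_add_const_right atBot (-1) tendsto_id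
    simpa using hlim.sub (hlim.comp h1)
  -- by MVT, the same difference tends to c
  have hdiffc : Tendsto (fun u => r u - r (u - 1)) atBot (nhds c) := by
    rw [Metric.tendsto_nhds]
    intro ε hε
    have h1 : ∀ᶠ v in atBot, dist (f v) c < ε := (Metric.tendsto_nhds.mp hfc) ε hε
    obtain ⟨U, hU⟩ := eventually_atBot.mp h1
    filter_upwards [eventually_le_atBot (min U u₀ - 1)] with u hu
    have hmin := le_min_iff.mp (by linarith : u + 1 ≤ min U u₀)
    have huU : u ≤ U := by linarith [hmin.1]
    have huu₀ : u < u₀ := by linarith [hmin.2]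
    have hsub : Icc (u - 1) u ⊆ Iio u₀ := fun x hx => lt_of_le_of_lt hx.2 huu₀
    have hcont : ContinuousOn r (Icc (u - 1) u) := fun x hx =>
      ((hode x (hsub hx)).continuousAt).continuousWithinAt
    obtain ⟨ξ, hξ, hξeq⟩ := exists_hasDerivAt_eq_slope r f (by linarith : u - 1 < u)
      hcont (fun x hx => hode x (hsub ⟨hx.1.le, hx.2.le⟩))
    have : (r u - r (u - 1)) = f ξ := by
      rw [hξeq]; field_simp; ring
    rw [this]
    exact hU ξ (by linarith [hξ.2])
  have hc0 : c = 0 := tendsto_nhds_unique hdiffc hdiff0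
  have : 1 - 2 * Mminus / l = 0 := by
    by_contra h
    apply h
    have := hc0
    rw [hc] at this
    linarith [this]
  field_simp at this
  linarith
end

section
/- Let M be smooth with M(u) > 0 and M(u) → 0 as u → +∞. Let r be a positive solution of ṙ(u) = -(1/2)(1 - 2M(u)/r(u)) on (u₀, +∞) with r(u) → 0 as u → +∞. Then the Kretschmann scalar k(u) = 48 M(u)²/r(u)⁶ is not bounded as u → +∞ along the solution. -/
open Set Filter

/-- complete evaporation in infinite time. Along an incoming principal
null geodesic (`r → 0` as `u → +∞`), the Kretschmann scalar `k = 48 M²/r⁶` is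
unbounded as `u → +∞`. -/
theorem stmt6 (M r : ℝ → ℝ) (u₀ : ℝ)
    (hM : ContDiff ℝ (⊤ : ℕ∞) M) (hMpos : ∀ u, 0 < M u)
    (hMlim : Tendsto M atTop (nhds 0))
    (hpos : ∀ u ∈ Ioi u₀, 0 < r u)
    (hode : ∀ u ∈ Ioi u₀, HasDerivAt r (-(1/2) * (1 - 2 * M u / r u)) u)
    (hrlim : Tendsto r atTop (nhds 0)) :
    ¬ ∃ C, ∀ u ∈ Ioi u₀, 48 * (M u) ^ 2 / (r u) ^ 6 ≤ C := by
  rintro ⟨C, hC⟩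
  -- C ≥ 0
  have hu1 : u₀ + 1 ∈ Ioi u₀ := mem_Ioi.mpr (lt_add_one u₀)
  have hC0 : 0 ≤ C := by
    have := hC (u₀ + 1) hu1
    have hr := hpos _ hu1
    have hM' := hMpos (u₀ + 1)
    have : 0 < 48 * (M (u₀+1)) ^ 2 / (r (u₀+1)) ^ 6 := by positivity
    linarith [hC (u₀+1) hu1]
  set B := Real.sqrt (C / 48) with hB
  have hB0 : 0 ≤ B := Real.sqrt_nonneg _
  have hBsq : B ^ 2 = C / 48 := Real.sq_sqrt (by linarith)
  -- M/r ≤ B * r² on Ioi u₀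
  have key : ∀ u ∈ Ioi u₀, M u / r u ≤ B * (r u) ^ 2 := by
    intro u hu
    have hr := hpos u hu
    have hMu := hMpos u
    have h1 : 48 * (M u) ^ 2 ≤ C * (r u) ^ 6 := by
      have := hC u hu
      rw [div_le_iff₀ (by positivity)] at this
      linarith
    have h2 : (M u) ^ 2 ≤ (B * (r u) ^ 3) ^ 2 := by
      have : (B * (r u)^3)^2 = (C/48) * (r u)^6 := by
        rw [mul_pow, hBsq]; ring
      rw [this]; linarith
    have h3 : M u ≤ B * (r u) ^ 3 := by nlinarith [hMpos u, mul_nonneg hB0 (le_of_lt (pow_pos hr 3))]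
    rw [div_le_iff₀ hr]
    calc M u ≤ B * (r u)^3 := h3
      _ = B * (r u)^2 * r u := by ring
  -- M/r → 0
  have hupper : Tendsto (fun u => B * (r u) ^ 2) atTop (nhds 0) := by
    have := (hrlim.pow 2).const_mul B
    simpa using this
  have hratio : Tendsto (fun u => M u / r u) atTop (nhds 0) := by
    apply tendsto_of_tendsto_of_tendsto_of_le_of_le' tendsto_const_nhds hupper
    · filter_upwards [eventually_gt_atTop u₀] with u hu
      exact le_of_lt (div_pos (hMpos u) (hpos u hu))
    · filter_upwards [eventually_gt_atTop u₀] with u hu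
      exact key u hu
  -- eventually 2M/r ≤ 1/2
  have hev : ∀ᶠ u in atTop, 2 * M u / r u ≤ 1/2 := by
    have h2 : Tendsto (fun u => 2 * M u / r u) atTop (nhds 0) := by
      have := hratio.const_mul 2
      simp only [mul_zero] at this
      convert this using 2 with u
      ring
    have := h2.eventually (eventually_le_nhds (by norm_num : (0:ℝ) < 1/2))
    exact this
  obtain ⟨U₁, hU₁⟩ := eventually_atTop.mp hev
  set U := max U₁ (u₀ + 1) with hUdef
  have hUgt : u₀ < U := lt_of_lt_of_le (by linarith) (le_max_right _ _)
  have hUsmall : ∀ u, U ≤ u → 2 * M u / r u ≤ 1/2 :=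
    fun u hu => hU₁ u (le_trans (le_max_left _ _) hu)
  -- g = r + u/4 is antitone on Ici U
  set g := fun u => r u + u / 4 with hg
  have hgderiv : ∀ u ∈ Ioi u₀, HasDerivAt g (-(1/2) * (1 - 2 * M u / r u) + 1/4) u := by
    intro u hu
    exact (hode u hu).add ((hasDerivAt_id u).div_const 4)
  have hanti : AntitoneOn g (Ici U) := by
    apply antitoneOn_of_deriv_nonpos (convex_Ici U)
    · intro x hx
      have hx' : x ∈ Ioi u₀ := lt_of_lt_of_le hUgt hx
      exact (hgderiv x hx').continuousAt.continuousWithinAt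
    · intro x hx
      rw [interior_Ici] at hx
      have hx' : x ∈ Ioi u₀ := lt_trans hUgt hx
      exact ((hgderiv x hx').differentiableAt.differentiableWithinAt)
    · intro x hx
      rw [interior_Ici] at hx
      have hx' : x ∈ Ioi u₀ := lt_trans hUgt hx
      rw [(hgderiv x hx').deriv]
      have := hUsmall x (le_of_lt hx)
      linarith
  -- contradiction
  have hrU : 0 < r U := hpos U hUgt
  set v := U + 4 * r U + 4 with hv
  have hUv : U ≤ v := by linarith
  have := hanti (self_mem_Ici) hUv hUv
  have hrv : 0 < r v := hpos v (lt_of_lt_of_le hUgt hUv)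
  simp only [hg] at this
  have : r v ≤ -1 := by
    have hveq : v / 4 = U / 4 + r U + 1 := by rw [hv]; ring
    linarith
  linarith
end

section
/- Let M be smooth positive with M(u) → 0 as u → +∞, and let r be a positive solution of ṙ(u) = -(1/2)(1 - 2M(u)/r(u)) on (u₀, +∞) with r(u) → 0 as u → +∞. If ṙ(u) has a limit as u → +∞, then that limit is 0 and consequently M(u)/r(u) → 1/2, i.e. r(u) ∼ 2M(u) as u → +∞. -/
open Set Filter

/-- if along an incoming principal null geodesic with `r → 0` the
derivative `ṙ` has a limit at `+∞`, that limit is `0` and `M/r → 1/2`, i.e.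
`r(u) ∼ 2M(u)`. -/
theorem stmt7 (M r : ℝ → ℝ) (u₀ L : ℝ)
    (hM : ContDiff ℝ (⊤ : ℕ∞) M) (hMpos : ∀ u, 0 < M u)
    (hMlim : Tendsto M atTop (nhds 0))
    (hpos : ∀ u ∈ Ioi u₀, 0 < r u)
    (hode : ∀ u ∈ Ioi u₀, HasDerivAt r (-(1/2) * (1 - 2 * M u / r u)) u)
    (hrlim : Tendsto r atTop (nhds 0))
    (hderlim : Tendsto (fun u => -(1/2) * (1 - 2 * M u / r u)) atTop (nhds L)) :
    L = 0 ∧ Tendsto (fun u => M u / r u) atTop (nhds (1/2)) := by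
  set F : ℝ → ℝ := fun u => -(1/2) * (1 - 2 * M u / r u) with hF
  have hL : L = 0 := by
    by_contra hL0
    have hLpos : (0:ℝ) < |L| / 2 := by positivity
    have h1 : ∀ᶠ u in atTop, |F u - L| < |L| / 2 := by
      have := hderlim.eventually (Metric.ball_mem_nhds L hLpos)
      simpa [Real.dist_eq] using this
    have h2 : ∀ᶠ u in atTop, |r u| < 1 := by
      have := hrlim.eventually (Metric.ball_mem_nhds (0:ℝ) one_pos)
      simpa [Real.dist_eq] using this
    obtain ⟨a₁, ha₁⟩ := eventually_atTop.1 h1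
    obtain ⟨B, hB⟩ := eventually_atTop.1 h2
    set a : ℝ := max a₁ (u₀ + 1) with ha
    have hau₀ : u₀ < a := lt_of_lt_of_le (by linarith) (le_max_right _ _)
    have hC : (0:ℝ) < 2 * (|r a| + 1) / |L| := by positivity
    set b : ℝ := max B (a + 2 * (|r a| + 1) / |L|) with hb
    have hab : a < b := lt_of_lt_of_le (by linarith) (le_max_right _ _)
    have hbB : B ≤ b := le_max_left _ _
    have hba : a + 2 * (|r a| + 1) / |L| ≤ b := le_max_right _ _
    -- MVT
    have hderiv : ∀ x ∈ Ioo a b, HasDerivAt r (F x) x := by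
      intro x hx
      exact hode x (lt_trans hau₀ hx.1)
    have hcont : ContinuousOn r (Icc a b) := by
      intro x hx
      exact ((hode x (lt_of_lt_of_le hau₀ hx.1)).continuousAt).continuousWithinAt
    obtain ⟨c, hc, hceq⟩ := exists_hasDerivAt_eq_slope r F hab hcont hderiv
    -- |F c| > |L|/2
    have hca : a ≤ c := le_of_lt hc.1
    have hFc : |F c - L| < |L| / 2 := ha₁ c (le_trans (le_max_left _ _) hca)
    have hFcbig : |L| / 2 < |F c| := by
      have := abs_sub_abs_le_abs_sub L (F c)
      rw [abs_sub_comm] at this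
      linarith
    -- but slope is small
    have hrb : |r b| < 1 := hB b hbB
    have hnum : |r b - r a| < |r a| + 1 := by
      calc |r b - r a| ≤ |r b| + |r a| := abs_sub _ _
        _ < |r a| + 1 := by linarith
    have hba' : 2 * (|r a| + 1) / |L| ≤ b - a := by linarith
    have hslope : |F c| < |L| / 2 := by
      rw [hceq, abs_div]
      have hbapos : (0:ℝ) < b - a := by linarith
      rw [abs_of_pos hbapos]
      rw [div_lt_iff₀ hbapos]
      have h3 : |L| / 2 * (2 * (|r a| + 1) / |L|) = |r a| + 1 := by
        field_simp
      calc |r b - r a| < |r a| + 1 := hnum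
        _ = |L| / 2 * (2 * (|r a| + 1) / |L|) := h3.symm
        _ ≤ |L| / 2 * (b - a) := by
            apply mul_le_mul_of_nonneg_left hba' (by positivity)
    linarith
  refine ⟨hL, ?_⟩
  have : Tendsto (fun u => F u + 1/2) atTop (nhds (L + 1/2)) :=
    hderlim.add tendsto_const_nhds
  rw [hL, zero_add] at this
  have heq : (fun u => F u + 1/2) = fun u => M u / r u := by
    funext u
    simp only [hF]
    ring
  rwa [heq] at this
end

section
/- Let M be smooth positive with M(u) → 0 as u → +∞, and suppose r is a positive solution of ṙ(u) = -(1/2)(1 - 2M(u)/r(u)) on (u₀, +∞) with r(u) → 0 and ṙ(u) → 0 as u → +∞. Then the Kretschmann scalar satisfies k(u) = 48M(u)²/r(u)⁶ ∼ 3/(4 M(u)⁴) as u → +∞; in particular k(u) → +∞. -/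
open Set Filter

/-- along an incoming principal null geodesic with `r → 0` and `ṙ → 0`,
the Kretschmann scalar satisfies `k(u) = 48M(u)²/r(u)⁶ ∼ 3/(4M(u)⁴)` as `u → +∞`;
in particular `k(u) → +∞`. -/
theorem stmt8 (M r : ℝ → ℝ) (u₀ : ℝ)
    (hM : ContDiff ℝ (⊤ : ℕ∞) M) (hMpos : ∀ u, 0 < M u)
    (hMlim : Tendsto M atTop (nhds 0))
    (hpos : ∀ u ∈ Ioi u₀, 0 < r u)
    (hode : ∀ u ∈ Ioi u₀, HasDerivAt r (-(1/2) * (1 - 2 * M u / r u)) u)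
    (hrlim : Tendsto r atTop (nhds 0))
    (hderlim : Tendsto (fun u => -(1/2) * (1 - 2 * M u / r u)) atTop (nhds 0)) :
    Tendsto (fun u => (48 * (M u) ^ 2 / (r u) ^ 6) / (3 / (4 * (M u) ^ 4)))
      atTop (nhds 1) ∧
    Tendsto (fun u => 48 * (M u) ^ 2 / (r u) ^ 6) atTop atTop := by
  -- g := 2M/r → 1
  have hg : Tendsto (fun u => 2 * M u / r u) atTop (nhds 1) := by
    have h1 : Tendsto (fun u => 1 - (-2) * (-(1/2) * (1 - 2 * M u / r u))) atTop
        (nhds (1 - (-2) * 0)) :=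
      (tendsto_const_nhds.sub (hderlim.const_mul (-2)))
    simp only [mul_zero, sub_zero] at h1
    convert h1 using 2 with u
    ring
  -- ratio eventually equals g^6
  have heq : ∀ᶠ u in atTop, (48 * (M u) ^ 2 / (r u) ^ 6) / (3 / (4 * (M u) ^ 4))
      = (2 * M u / r u) ^ 6 := by
    filter_upwards [eventually_gt_atTop u₀] with u hu
    have hr := (hpos u hu).ne'
    have hm := (hMpos u).ne'
    field_simp
    ring
  have hrat : Tendsto (fun u => (48 * (M u) ^ 2 / (r u) ^ 6) / (3 / (4 * (M u) ^ 4)))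
      atTop (nhds 1) := by
    have : Tendsto (fun u => (2 * M u / r u) ^ 6) atTop (nhds 1) := by
      simpa using hg.pow 6
    exact this.congr' (heq.mono fun _ h => h.symm)
  refine ⟨hrat, ?_⟩
  -- 3/(4M⁴) → ∞
  have hMinf : Tendsto (fun u => 3 / (4 * (M u) ^ 4)) atTop atTop := by
    have h0 : Tendsto (fun u => 4 * (M u) ^ 4) atTop (nhdsWithin 0 (Ioi 0)) := by
      apply tendsto_nhdsWithin_of_tendsto_nhds_of_eventually_within
      · simpa using (hMlim.pow 4).const_mul 4
      · filter_upwards with u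
        exact mem_Ioi.mpr (by have := hMpos u; positivity)
    have := h0.inv_tendsto_nhdsGT_zero
    have h3 : (0:ℝ) < 3 := by norm_num
    simpa [div_eq_mul_inv] using this.const_mul_atTop h3
  have : Tendsto (fun u => ((48 * (M u) ^ 2 / (r u) ^ 6) / (3 / (4 * (M u) ^ 4)))
      * (3 / (4 * (M u) ^ 4))) atTop atTop :=
    Tendsto.pos_mul_atTop (by norm_num : (0:ℝ) < 1) hrat hMinf
  refine this.congr' ?_
  filter_upwards [eventually_gt_atTop u₀] with u hu
  have hr := (hpos u hu).ne'
  have hm := (hMpos u).ne'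
  field_simp
end

section
/- Let M be smooth, non-increasing, positive, with limits M₋ at -∞ and M₊ at +∞ where 0 ≤ M₊ < M₋, and suppose either M₊ > 0 or M is strictly decreasing on all of ℝ. If r is a maximal solution of ṙ(u) = -(1/2)(1 - 2M(u)/r(u)) satisfying 2M(u) ≤ r(u) ≤ 2M₋ on its domain, then r is defined on all of ℝ. -/
open Set Filter Topology

/-- A maximal positive solution of the null geodesic ODE `ṙ = -(1/2)(1 - 2M(u)/r)` on
the open order-connected set `s`. -/
def IsMaxNullSol (M : ℝ → ℝ) (s : Set ℝ) (r : ℝ → ℝ) : Prop :=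
  IsOpen s ∧ s.OrdConnected ∧ s.Nonempty ∧
  (∀ u ∈ s, 0 < r u ∧ HasDerivAt r (-(1/2) * (1 - 2 * M u / r u)) u) ∧
  ∀ (s' : Set ℝ) (r' : ℝ → ℝ), IsOpen s' → s'.OrdConnected → s ⊆ s' →
    (∀ u ∈ s, r' u = r u) →
    (∀ u ∈ s', 0 < r' u ∧ HasDerivAt r' (-(1/2) * (1 - 2 * M u / r' u)) u) →
    s' = s

/-- Extension of a solution of a time-dependent scalar ODE past a finite right endpoint,
provided the solution stays in a compact set where the vector field is `C¹`. -/
lemma extend_right (F : ℝ → ℝ → ℝ)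
    (hF : ∀ p : ℝ × ℝ, 0 < p.2 → ContDiffAt ℝ 1 (Function.uncurry F) p)
    (s : Set ℝ) (r : ℝ → ℝ) (hso : IsOpen s) (hsc : s.OrdConnected)
    (b : ℝ) (hlub : IsLUB s b) (hbns : b ∉ s)
    (hsol : ∀ u ∈ s, 0 < r u ∧ HasDerivAt r (F u (r u)) u)
    (u₀ : ℝ) (hu₀ : u₀ ∈ s) (ρ₁ ρ₂ : ℝ) (hρ₁ : 0 < ρ₁)
    (hbd : ∀ u ∈ s, u₀ ≤ u → ρ₁ ≤ r u ∧ r u ≤ ρ₂) :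
    ∃ (s' : Set ℝ) (r' : ℝ → ℝ), IsOpen s' ∧ s'.OrdConnected ∧ s ⊆ s' ∧ b ∈ s' ∧
      (∀ u ∈ s, r' u = r u) ∧ ∀ u ∈ s', 0 < r' u ∧ HasDerivAt r' (F u (r' u)) u := by
  have hsub : ∀ u ∈ s, u < b := fun u hu =>
    lt_of_le_of_ne (hlub.1 hu) (fun h => hbns (h ▸ hu))
  have hu₀b : u₀ < b := hsub u₀ hu₀
  have hIoo : Ioo u₀ b ⊆ s := by
    intro z hz
    obtain ⟨w, hws, hzw⟩ : ∃ w ∈ s, z < w := by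
      by_contra h
      push_neg at h
      exact absurd (hlub.2 h) (not_le.2 hz.2)
    exact hsc.out hu₀ hws ⟨hz.1.le, hzw.le⟩
  -- bound the derivative on `Ioo u₀ b`
  obtain ⟨C, hC⟩ : ∃ C, ∀ x ∈ Icc u₀ b ×ˢ Icc ρ₁ ρ₂, ‖Function.uncurry F x‖ ≤ C := by
    apply (isCompact_Icc.prod isCompact_Icc).exists_bound_of_continuousOn
    intro p hp
    exact ((hF p (lt_of_lt_of_le hρ₁ hp.2.1)).continuousAt).continuousWithinAt
  have hmem : ∀ x ∈ Ioo u₀ b, (x, r x) ∈ Icc u₀ b ×ˢ Icc ρ₁ ρ₂ := by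
    intro x hx
    obtain ⟨h1, h2⟩ := hbd x (hIoo hx) hx.1.le
    exact ⟨⟨hx.1.le, hx.2.le⟩, h1, h2⟩
  have hlip : LipschitzOnWith C.toNNReal r (Ioo u₀ b) := by
    apply (convex_Ioo u₀ b).lipschitzOnWith_of_nnnorm_hasDerivWithin_le
      (f' := fun x => F x (r x))
    · exact fun x hx => ((hsol x (hIoo hx)).2).hasDerivWithinAt
    · intro x hx
      rw [← NNReal.coe_le_coe, coe_nnnorm]
      exact le_trans (hC _ (hmem x hx)) (Real.le_coe_toNNReal C)
  obtain ⟨g₀, hg₀lip, hg₀eq⟩ := hlip.extend_real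
  set L := g₀ b with hLdef
  have hTne : (𝓝[Ioo u₀ b] b).NeBot := by
    refine mem_closure_iff_nhdsWithin_neBot.1 ?_
    rw [closure_Ioo hu₀b.ne]
    exact ⟨hu₀b.le, le_rfl⟩
  have htends : Tendsto r (𝓝[Ioo u₀ b] b) (𝓝 L) := by
    have h1 : Tendsto g₀ (𝓝[Ioo u₀ b] b) (𝓝 L) :=
      (hg₀lip.continuous.tendsto b).mono_left nhdsWithin_le_nhds
    exact h1.congr' (eventuallyEq_of_mem self_mem_nhdsWithin fun x hx => (hg₀eq hx).symm)
  have hLρ : ρ₁ ≤ L := by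
    refine ge_of_tendsto htends ?_
    filter_upwards [self_mem_nhdsWithin] with x hx
    exact (hbd x (hIoo hx) hx.1.le).1
  have hL0 : 0 < L := lt_of_lt_of_le hρ₁ hLρ
  -- local solution at `(b, L)` via time-augmentation
  obtain ⟨f, hfb, ε, hε, hf⟩ :=
    ContDiffAt.exists_forall_mem_closedBall_exists_eq_forall_mem_Ioo_hasDerivAt₀ (E := ℝ × ℝ)
      (f := fun p : ℝ × ℝ => (1, F p.1 p.2)) (x₀ := (b, L))
      (contDiffAt_const.prodMk (hF (b, L) hL0)) b
  have hbIoo : b ∈ Ioo (b - ε) (b + ε) := ⟨by linarith, by linarith⟩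
  -- the first component of `f` is the identity
  have hφ : ∀ t ∈ Ioo (b - ε) (b + ε), HasDerivAt (fun u => (f u).1 - u) 0 t := by
    intro t ht
    have h1 : HasDerivAt (fun u => (f u).1) 1 t := by
      simpa using (hf t ht).hasFDerivAt.fst.hasDerivAt
    have h3 : HasDerivAt (fun u => (f u).1 - u) (1 - 1) t := h1.sub (hasDerivAt_id' t)
    rwa [sub_self] at h3
  have hfst : ∀ t ∈ Ioo (b - ε) (b + ε), (f t).1 = t := by
    have key : ∀ t ∈ Ioo (b - ε) (b + ε), (f b).1 - b = (f t).1 - t := by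
      intro t ht
      rcases le_total t b with h | h
      · have hsubset : Icc t b ⊆ Ioo (b - ε) (b + ε) := Icc_subset_Ioo ht.1 hbIoo.2
        have := constant_of_has_deriv_right_zero
          (f := fun u => (f u).1 - u) (a := t) (b := b)
          (fun x hx => (hφ x (hsubset hx)).continuousAt.continuousWithinAt)
          (fun x hx => (hφ x (hsubset (Ico_subset_Icc_self hx))).hasDerivWithinAt)
        exact this b (right_mem_Icc.2 h)
      · have hsubset : Icc b t ⊆ Ioo (b - ε) (b + ε) := Icc_subset_Ioo hbIoo.1 ht.2
        have := constant_of_has_deriv_right_zero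
          (f := fun u => (f u).1 - u) (a := b) (b := t)
          (fun x hx => (hφ x (hsubset hx)).continuousAt.continuousWithinAt)
          (fun x hx => (hφ x (hsubset (Ico_subset_Icc_self hx))).hasDerivWithinAt)
        exact (this t (right_mem_Icc.2 h)).symm
    intro t ht
    have h2 := key t ht
    rw [hfb] at h2
    simp only [sub_self] at h2
    linarith [h2]
  set g : ℝ → ℝ := fun t => (f t).2 with hgdef
  have hgb : g b = L := by rw [hgdef]; simp [hfb]
  have hg : ∀ t ∈ Ioo (b - ε) (b + ε), HasDerivAt g (F t (g t)) t := by
    intro t ht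
    have h2 : HasDerivAt g (F (f t).1 (f t).2) t := by
      simpa using (hf t ht).hasFDerivAt.snd.hasDerivAt
    rwa [hfst t ht] at h2
  -- positivity of `g` near `b`
  obtain ⟨δ₁, hδ₁, hδ₁pos⟩ : ∃ δ₁ > (0:ℝ), ∀ t, |t - b| < δ₁ → 0 < g t := by
    have h1 := (hg b hbIoo).continuousAt.preimage_mem_nhds
      (Ioi_mem_nhds (by rw [hgb]; exact hL0) : Ioi (0:ℝ) ∈ 𝓝 (g b))
    rw [Metric.mem_nhds_iff] at h1
    obtain ⟨δ₁, hp, h2⟩ := h1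
    exact ⟨δ₁, hp, fun t ht => h2 (by simpa [Real.dist_eq] using ht)⟩
  -- choose the gluing radius
  set δ := min (min ε (b - u₀)) δ₁ / 2 with hδdef
  have hm1 : min (min ε (b - u₀)) δ₁ ≤ ε := le_trans (min_le_left _ _) (min_le_left _ _)
  have hm2 : min (min ε (b - u₀)) δ₁ ≤ b - u₀ := le_trans (min_le_left _ _) (min_le_right _ _)
  have hm3 : min (min ε (b - u₀)) δ₁ ≤ δ₁ := min_le_right _ _
  have hm0 : 0 < min (min ε (b - u₀)) δ₁ := lt_min (lt_min hε (by linarith)) hδ₁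
  have hδpos : 0 < δ := by rw [hδdef]; linarith
  have hδε : δ < ε := by rw [hδdef]; linarith
  have hδu₀ : u₀ < b - δ := by rw [hδdef]; linarith
  have hδ₁' : δ < δ₁ := by rw [hδdef]; linarith
  refine ⟨s ∪ Ioo (b - δ) (b + δ), fun u => if u < b then r u else g u,
    hso.union isOpen_Ioo, ?_, subset_union_left, Or.inr ⟨by linarith, by linarith⟩,
    fun u hu => if_pos (hsub u hu), ?_⟩
  · -- order-connectedness
    constructor
    intro x hx y hy z hz
    rcases hx with hxs | hxI
    · by_cases hzb : z < b
      · obtain ⟨w, hws, hzw⟩ : ∃ w ∈ s, z < w := by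
          by_contra h
          push_neg at h
          exact absurd (hlub.2 h) (not_le.2 hzb)
        exact Or.inl (hsc.out hxs hws ⟨hz.1, hzw.le⟩)
      · push_neg at hzb
        have hyI : y ∈ Ioo (b - δ) (b + δ) := by
          rcases hy with hys | hyI
          · exact absurd (hsub y hys) (not_lt.2 (le_trans hzb hz.2))
          · exact hyI
        exact Or.inr ⟨by linarith, lt_of_le_of_lt hz.2 hyI.2⟩
    · refine Or.inr ⟨lt_of_lt_of_le hxI.1 hz.1, ?_⟩
      rcases hy with hys | hyI
      · exact lt_of_le_of_lt hz.2 (lt_trans (hsub y hys) (by linarith))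
      · exact lt_of_le_of_lt hz.2 hyI.2
  · -- the glued function solves the ODE on the union
    intro u hu
    rcases lt_trichotomy u b with hub | hub | hub
    · -- below `b` : agrees with `r`
      have hus : u ∈ s := by
        rcases hu with h | h
        · exact h
        · exact hIoo ⟨by linarith [h.1], hub⟩
      have heq : (fun w => if w < b then r w else g w) =ᶠ[𝓝 u] r :=
        eventuallyEq_of_mem (Iio_mem_nhds hub) fun w hw => if_pos hw
      constructor
      · simpa only [if_pos hub] using (hsol u hus).1
      · have h2 := (hsol u hus).2.congr_of_eventuallyEq heq
        simpa only [if_pos hub] using h2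
    · -- at `b` : glue left and right derivatives
      subst hub
      have hrb : (if u < u then r u else g u) = L := by rw [if_neg (lt_irrefl u), hgb]
      refine ⟨by simp only [hrb]; exact hL0, ?_⟩
      show HasDerivAt _ (F u (if u < u then r u else g u)) u
      rw [hrb]
      have hright : HasDerivWithinAt (fun w => if w < u then r w else g w) (F u L) (Ici u) u := by
        have h1 := (hg u hbIoo).hasDerivWithinAt (s := Ici u)
        rw [hgb] at h1
        exact h1.congr (fun w hw => if_neg (not_lt.2 hw)) (if_neg (lt_irrefl u))
      have hleft : HasDerivWithinAt (fun w => if w < u then r w else g w) (F u L) (Iic u) u := by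
        apply hasDerivWithinAt_Iic_of_tendsto_deriv (s := Ioo u₀ u)
        · intro x hx
          have heq : (fun w => if w < u then r w else g w) =ᶠ[𝓝 x] r :=
            eventuallyEq_of_mem (Iio_mem_nhds hx.2) fun w hw => if_pos hw
          exact (((hsol x (hIoo hx)).2.congr_of_eventuallyEq heq).differentiableAt).differentiableWithinAt
        · have h1 : Tendsto (fun w => if w < u then r w else g w) (𝓝[Ioo u₀ u] u) (𝓝 L) := by
            refine htends.congr' ?_
            filter_upwards [self_mem_nhdsWithin] with x hx
            exact (if_pos hx.2).symm
          have h2 : ContinuousWithinAt (fun w => if w < u then r w else g w) (Ioo u₀ u) u := by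
            unfold ContinuousWithinAt
            simpa only [hrb] using h1
          exact h2
        · exact Ioo_mem_nhdsLT_of_mem ⟨hu₀b, le_rfl⟩
        · have hcF : ContinuousAt (fun x : ℝ => F x (g₀ x)) u := by
            have h1 : ContinuousAt (fun x : ℝ => (x, g₀ x)) u :=
              (continuous_id.prodMk hg₀lip.continuous).continuousAt
            have h0 : ContinuousAt (Function.uncurry F) ((fun x : ℝ => (x, g₀ x)) u) :=
              (hF (u, L) hL0).continuousAt
            exact ContinuousAt.comp (f := fun x : ℝ => (x, g₀ x)) h0 h1
          have h2 : Tendsto (fun x => F x (g₀ x)) (𝓝[<] u) (𝓝 (F u L)) :=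
            hcF.tendsto.mono_left nhdsWithin_le_nhds
          refine h2.congr' ?_
          filter_upwards [Ioo_mem_nhdsLT_of_mem ⟨hu₀b, le_rfl⟩] with x hx
          have heq : (fun w => if w < u then r w else g w) =ᶠ[𝓝 x] r :=
            eventuallyEq_of_mem (Iio_mem_nhds hx.2) fun w hw => if_pos hw
          have hd : HasDerivAt (fun w => if w < u then r w else g w) (F x (r x)) x :=
            (hsol x (hIoo hx)).2.congr_of_eventuallyEq heq
          rw [hd.deriv, hg₀eq hx]
      have h3 := hleft.union hright
      rw [Iic_union_Ici] at h3
      exact hasDerivWithinAt_univ.1 h3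
    · -- above `b` : agrees with `g`
      have huI : u ∈ Ioo (b - δ) (b + δ) := by
        rcases hu with h | h
        · exact absurd (hsub u h) (not_lt.2 hub.le)
        · exact h
      have huε : u ∈ Ioo (b - ε) (b + ε) := ⟨by linarith [huI.1], by linarith [huI.2]⟩
      have heq : (fun w => if w < b then r w else g w) =ᶠ[𝓝 u] g :=
        eventuallyEq_of_mem (Ioi_mem_nhds hub) fun w hw => if_neg (not_lt.2 hw.le)
      constructor
      · have h1 : 0 < g u := by
          apply hδ₁pos
          rw [abs_sub_lt_iff]
          exact ⟨by linarith [huI.2], by linarith [huI.1]⟩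
        simpa only [if_neg (not_lt.2 hub.le)] using h1
      · have h2 := (hg u huε).congr_of_eventuallyEq heq
        simpa only [if_neg (not_lt.2 hub.le)] using h2

/-- a maximal solution trapped between `2M(u)` and `2M₋` is global. -/
theorem stmt13 (M : ℝ → ℝ) (Mminus Mplus : ℝ)
    (hM : ContDiff ℝ (⊤ : ℕ∞) M) (hMmono : Antitone M) (hMpos : ∀ u, 0 < M u)
    (hMlimm : Tendsto M atBot (nhds Mminus))
    (hMlimp : Tendsto M atTop (nhds Mplus))
    (hMplus : 0 ≤ Mplus) (hMM : Mplus < Mminus)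
    (hcase : 0 < Mplus ∨ StrictAnti M)
    (s : Set ℝ) (r : ℝ → ℝ) (hmax : IsMaxNullSol M s r)
    (hbounds : ∀ u ∈ s, 2 * M u ≤ r u ∧ r u ≤ 2 * Mminus) :
    s = univ := by
  obtain ⟨hso, hsc, hne, hsol, hmaxl⟩ := hmax
  have hF : ∀ p : ℝ × ℝ, 0 < p.2 →
      ContDiffAt ℝ 1 (Function.uncurry fun u x => -(1/2) * (1 - 2 * M u / x)) p := by
    intro p hp
    have h1 : ContDiffAt ℝ 1 (fun q : ℝ × ℝ => M q.1) p :=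
      ((hM.of_le (by simp)).comp contDiff_fst).contDiffAt
    exact contDiffAt_const.mul (contDiffAt_const.sub
      ((contDiffAt_const.mul h1).div contDiff_snd.contDiffAt hp.ne'))
  have hF' : ∀ p : ℝ × ℝ, 0 < p.2 →
      ContDiffAt ℝ 1 (Function.uncurry fun u x => (1/2) * (1 - 2 * M (-u) / x)) p := by
    intro p hp
    have h1 : ContDiffAt ℝ 1 (fun q : ℝ × ℝ => M (-q.1)) p :=
      ((hM.of_le (by simp)).comp contDiff_fst.neg).contDiffAt
    exact contDiffAt_const.mul (contDiffAt_const.sub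
      ((contDiffAt_const.mul h1).div contDiff_snd.contDiffAt hp.ne'))
  by_contra hsuniv
  have hcases : BddAbove s ∨ BddBelow s := by
    by_contra h
    push_neg at h
    obtain ⟨ha, hb⟩ := h
    apply hsuniv
    apply eq_univ_of_forall
    intro z
    obtain ⟨x, hxs, hxz⟩ := not_bddBelow_iff.1 hb z
    obtain ⟨y, hys, hzy⟩ := not_bddAbove_iff.1 ha z
    exact hsc.out hxs hys ⟨hxz.le, hzy.le⟩
  obtain ⟨u₀, hu₀⟩ := hne
  rcases hcases with hA | hB
  · -- right endpoint
    have hlub : IsLUB s (sSup s) := isLUB_csSup ⟨u₀, hu₀⟩ hA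
    have hbns : sSup s ∉ s := by
      intro hbs
      obtain ⟨η, hη, hball⟩ := Metric.isOpen_iff.1 hso _ hbs
      have h1 : sSup s + η/2 ∈ s := hball (by rw [Metric.mem_ball, Real.dist_eq]; rw [abs_of_nonneg] <;> linarith)
      have := hlub.1 h1
      linarith
    obtain ⟨s', r', h1, h2, h3, h4, h5, h6⟩ :=
      extend_right (fun u x => -(1/2) * (1 - 2 * M u / x)) hF s r hso hsc (sSup s) hlub hbns
        hsol u₀ hu₀ (2 * M (sSup s)) (2 * Mminus) (by linarith [hMpos (sSup s)])
        (by
          intro u hu _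
          refine ⟨?_, (hbounds u hu).2⟩
          have := hMmono (hlub.1 hu)
          linarith [(hbounds u hu).1])
    have := hmaxl s' r' h1 h2 h3 h5 h6
    rw [this] at h4
    exact hbns h4
  · -- left endpoint, by reflection
    have hglb : IsGLB s (sInf s) := isGLB_csInf ⟨u₀, hu₀⟩ hB
    have hans : sInf s ∉ s := by
      intro has
      obtain ⟨η, hη, hball⟩ := Metric.isOpen_iff.1 hso _ has
      have h1 : sInf s - η/2 ∈ s := hball (by rw [Metric.mem_ball, Real.dist_eq]; rw [abs_of_nonpos] <;> linarith)
      have := hglb.1 h1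
      linarith
    have hlub' : IsLUB (-s) (-sInf s) := hglb.neg
    have hso' : IsOpen (-s) := hso.neg
    have hsc' : (-s).OrdConnected := by
      constructor
      intro x hx y hy z hz
      exact Set.mem_neg.2 (hsc.out (Set.mem_neg.1 hy) (Set.mem_neg.1 hx)
        ⟨neg_le_neg hz.2, neg_le_neg hz.1⟩)
    have hans' : -sInf s ∉ -s := by
      intro h
      exact hans (by simpa using Set.mem_neg.1 h)
    have hsol' : ∀ u ∈ -s, 0 < r (-u) ∧
        HasDerivAt (fun w => r (-w)) ((fun u x => (1/2) * (1 - 2 * M (-u) / x)) u (r (-u))) u := by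
      intro u hu
      have h1 := hsol (-u) (Set.mem_neg.1 hu)
      refine ⟨h1.1, ?_⟩
      have h2 : HasDerivAt (fun w : ℝ => r (-w))
          ((-(1/2) * (1 - 2 * M (-u) / r (-u))) * (-1)) u := by
        have := HasDerivAt.comp u h1.2 (hasDerivAt_neg u)
        simpa [Function.comp_def] using this
      convert h2 using 1
      ring
    obtain ⟨s', R', h1, h2, h3, h4, h5, h6⟩ :=
      extend_right (fun u x => (1/2) * (1 - 2 * M (-u) / x)) hF' (-s) (fun w => r (-w))
        hso' hsc' (-sInf s) hlub' hans' hsol' (-u₀) (Set.mem_neg.2 (by simpa using hu₀))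
        (2 * M u₀) (2 * Mminus) (by linarith [hMpos u₀])
        (by
          intro v hv hle
          have hvs : -v ∈ s := Set.mem_neg.1 hv
          have h7 : -v ≤ u₀ := by linarith
          have h8 := hMmono h7
          exact ⟨by linarith [(hbounds _ hvs).1], (hbounds _ hvs).2⟩)
    -- reflect back
    have h2' : (-s').OrdConnected := by
      constructor
      intro x hx y hy z hz
      exact Set.mem_neg.2 (h2.out (Set.mem_neg.1 hy) (Set.mem_neg.1 hx)
        ⟨neg_le_neg hz.2, neg_le_neg hz.1⟩)
    have h3' : s ⊆ -s' := by
      intro u hu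
      exact Set.mem_neg.2 (h3 (Set.mem_neg.2 (by simpa using hu)))
    have h5' : ∀ u ∈ s, R' (-u) = r u := by
      intro u hu
      have := h5 (-u) (Set.mem_neg.2 (by simpa using hu))
      simpa using this
    have h6' : ∀ u ∈ -s', 0 < R' (-u) ∧
        HasDerivAt (fun w => R' (-w)) (-(1/2) * (1 - 2 * M u / R' (-u))) u := by
      intro u hu
      have h7 := h6 (-u) (Set.mem_neg.1 hu)
      refine ⟨h7.1, ?_⟩
      have h8 : HasDerivAt (fun w : ℝ => R' (-w))
          (((fun v x => (1/2) * (1 - 2 * M (-v) / x)) (-u) (R' (-u))) * (-1)) u := by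
        have := HasDerivAt.comp u h7.2 (hasDerivAt_neg u)
        simpa [Function.comp_def] using this
      convert h8 using 1
      simp only [neg_neg]
      ring
    have hfinal := hmaxl (-s') (fun w => R' (-w)) h1.neg h2' h3' h5' h6'
    have h9 : sInf s ∈ -s' := Set.mem_neg.2 h4
    rw [hfinal] at h9
    exact hans h9
end

section
/- Let M be smooth, positive, strictly decreasing on ℝ with M(u) → M₋ > 0 as u → -∞ and M(u) → 0 as u → +∞. Any maximal positive solution r of ṙ(u) = -(1/2)(1 - 2M(u)/r(u)) whose domain has a finite left endpoint u₁ satisfies lim_{u→u₁⁺} r(u) = 0. -/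
open Set Filter

/-- Extension lemma: if a maximal solution is bounded between `ε > 0` and `K` on `Ioo u₁ v`,
where `u₁ ∉ s` is the infimum of the domain, we get a contradiction
(the solution can be extended past `u₁`). -/
lemma extendFalse (M : ℝ → ℝ) (Mb : ℝ) (hMb : 0 < Mb) (hMc : Continuous M)
    (hMpos : ∀ u, 0 < M u) (hMle : ∀ u, M u ≤ Mb)
    (s : Set ℝ) (r : ℝ → ℝ) (hmax : IsMaxNullSol M s r)
    (u₁ v : ℝ) (hu₁ : u₁ ∉ s) (huv : u₁ < v)
    (hsub : Ioo u₁ v ⊆ s) (hIoi : s ⊆ Ioi u₁) (hvs : v ∈ s)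
    (ε K : ℝ) (hε : 0 < ε)
    (hbd : ∀ u ∈ Ioo u₁ v, r u ∈ Icc ε K) : False := by
  classical
  obtain ⟨hs, hso, -, hsol, hmaxP⟩ := hmax
  -- ε ≤ K
  obtain ⟨u', hu'⟩ := nonempty_Ioo.mpr huv
  have hεK : ε ≤ K := le_trans (hbd u' hu').1 (hbd u' hu').2
  -- clamped vector field
  set g : ℝ → ℝ := fun x => max (ε/2) (min x (K + ε)) with hg_def
  set F : ℝ → ℝ → ℝ := fun t x => -(1/2) * (1 - 2 * M t / g x) with hF_def
  have hg1 : ∀ x, ε/2 ≤ g x := fun x => le_max_left _ _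
  have hg2 : ∀ x, g x ≤ K + ε := fun x => max_le (by linarith) (min_le_right _ _)
  have hgpos : ∀ x, 0 < g x := fun x => lt_of_lt_of_le (by linarith) (hg1 x)
  have hgid : ∀ x, ε/2 ≤ x → x ≤ K + ε → g x = x := by
    intro x h1 h2
    simp only [hg_def]
    rw [min_eq_left h2, max_eq_right h1]
  have hglip : ∀ x y, |g x - g y| ≤ |x - y| := by
    intro x y
    have h1 : |g x - g y| ≤ |min x (K + ε) - min y (K + ε)| := by
      simp only [hg_def]
      rw [max_comm (ε/2) (min x (K+ε)), max_comm (ε/2) (min y (K+ε))]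
      exact abs_max_sub_max_le_abs _ _ _
    refine h1.trans ?_
    have := abs_min_sub_min_le_max x (K + ε) y (K + ε)
    simpa using this
  -- Lipschitz constant
  set Lr : ℝ := Mb / (ε/2)^2 with hLr_def
  have hLrpos : 0 < Lr := by positivity
  set L : NNReal := Real.toNNReal Lr with hL_def
  have hLcoe : (L : ℝ) = Lr := Real.coe_toNNReal _ hLrpos.le
  have hFlip : ∀ t, LipschitzWith L (F t) := by
    intro t
    apply LipschitzWith.of_dist_le_mul
    intro x y
    rw [Real.dist_eq, Real.dist_eq, hLcoe]
    have hgx := hgpos x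
    have hgy := hgpos y
    have h1 : F t x - F t y = M t * (g y - g x) / (g x * g y) := by
      simp only [hF_def]
      field_simp
      ring
    rw [h1, abs_div, abs_mul, abs_of_pos (mul_pos hgx hgy), abs_of_pos (hMpos t)]
    have hnum : M t * |g y - g x| ≤ Mb * |x - y| := by
      have h3 : |g y - g x| ≤ |x - y| := by
        rw [abs_sub_comm x y]; exact hglip y x
      exact mul_le_mul (hMle t) h3 (abs_nonneg _) hMb.le
    have hden : (ε/2) * (ε/2) ≤ g x * g y :=
      mul_le_mul (hg1 x) (hg1 y) (by linarith) hgx.le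
    have h2 : M t * |g y - g x| / (g x * g y) ≤ Mb * |x - y| / ((ε/2) * (ε/2)) :=
      div_le_div₀ (by positivity) hnum (by positivity) hden
    calc M t * |g y - g x| / (g x * g y) ≤ Mb * |x - y| / ((ε/2) * (ε/2)) := h2
      _ = Lr * |x - y| := by rw [hLr_def]; ring
  -- bound on F
  set C : ℝ := 1/2 + Mb / (ε/2) with hC_def
  have hC : 0 < C := by positivity
  have hFbd : ∀ t x, |F t x| ≤ C := by
    intro t x
    have h1 : F t x = -(1/2) + M t / g x := by simp only [hF_def]; ring
    have h2 : 0 < M t / g x := div_pos (hMpos t) (hgpos x)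
    have h3 : M t / g x ≤ Mb / (ε/2) := div_le_div₀ hMb.le (hMle t) (by linarith) (hg1 x)
    rw [h1, abs_le]
    constructor <;> [skip; skip] <;> simp only [hC_def] at * <;> nlinarith
  set δ : ℝ := (ε/2) / C with hδ_def
  have hδ : 0 < δ := by positivity
  have hCδ : C * δ = ε/2 := by
    rw [hδ_def]; field_simp
  -- pick the base point u⋆
  obtain ⟨w, hw1, hw2⟩ := exists_between (lt_min huv (by linarith : u₁ < u₁ + δ))
  have hwv : w < v := lt_of_lt_of_le hw2 (min_le_left _ _)
  have hwδ : w < u₁ + δ := lt_of_lt_of_le hw2 (min_le_right _ _)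
  have hwmem : w ∈ Ioo u₁ v := ⟨hw1, hwv⟩
  have hws : w ∈ s := hsub hwmem
  set x₀ : ℝ := r w with hx₀_def
  have hx₀ : x₀ ∈ Icc ε K := hbd w hwmem
  -- Picard–Lindelöf
  have hpl : IsPicardLindelof F (tmin := w - δ) (tmax := w + δ)
      ⟨w, by constructor <;> linarith⟩ x₀ (Real.toNNReal (ε/2)) 0 (Real.toNNReal C) L := by
    refine ⟨fun t _ => (hFlip t).lipschitzOnWith,
      fun x _ => Continuous.continuousOn (by fun_prop), fun t _ x _ => ?_, ?_⟩
    · rw [Real.norm_eq_abs, Real.coe_toNNReal _ hC.le]; exact hFbd t x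
    · have h1 : w + δ - w = δ := by ring
      have h2 : w - (w - δ) = δ := by ring
      simp only [Real.coe_toNNReal _ hC.le, Real.coe_toNNReal _ (by positivity : (0:ℝ) ≤ ε/2),
        NNReal.coe_zero, sub_zero]
      rw [h1, h2, max_self, hCδ]
  obtain ⟨α, hα0', hαd⟩ := hpl.exists_eq_forall_mem_Icc_hasDerivWithinAt (x := x₀) (by simp)
  have hα0 : α w = x₀ := hα0'
  -- a priori bound on α
  have hαbd : ∀ t ∈ Icc (w - δ) (w + δ), |α t - x₀| ≤ ε/2 := by
    intro t ht
    have hwmem' : w ∈ Icc (w - δ) (w + δ) := ⟨by linarith, by linarith⟩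
    have h1 : ‖α t - α w‖ ≤ C * ‖t - w‖ :=
      (convex_Icc _ _).norm_image_sub_le_of_norm_hasDerivWithin_le
        (fun x hx => hαd x hx) (fun x _ => by rw [Real.norm_eq_abs]; exact hFbd x (α x))
        hwmem' ht
    have h2 : |t - w| ≤ δ := abs_le.mpr ⟨by linarith [ht.1], by linarith [ht.2]⟩
    rw [hα0] at h1
    rw [Real.norm_eq_abs, Real.norm_eq_abs] at h1
    calc |α t - x₀| ≤ C * |t - w| := h1
      _ ≤ C * δ := by gcongr
      _ = ε/2 := hCδ
  have hαrange : ∀ t ∈ Icc (w - δ) (w + δ), ε/2 ≤ α t ∧ α t ≤ K + ε := by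
    intro t ht
    have := abs_le.mp (hαbd t ht)
    constructor <;> [nlinarith [hx₀.1]; nlinarith [hx₀.2]]
  have hαODE : ∀ t ∈ Ioo (w - δ) (w + δ), HasDerivAt α (F t (α t)) t := fun t ht =>
    (hαd t (Ioo_subset_Icc_self ht)).hasDerivAt (Icc_mem_nhds ht.1 ht.2)
  -- uniqueness on the overlap
  set w₂ : ℝ := min v (w + δ) with hw₂_def
  have hw₂1 : w < w₂ := lt_min hwv (by linarith)
  have hw₂v : w₂ ≤ v := min_le_left _ _
  have hw₂δ : w₂ ≤ w + δ := min_le_right _ _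
  have hwδ1 : w - δ < u₁ := by linarith
  have hEq : EqOn r α (Ioo u₁ w₂) := by
    apply ODE_solution_unique_of_mem_Ioo (v := F) (s := fun _ => (univ : Set ℝ)) (K := L)
      (fun t _ => (hFlip t).lipschitzOnWith) (⟨hw1, hw₂1⟩ : w ∈ Ioo u₁ w₂)
    · intro t ht
      have htv : t ∈ Ioo u₁ v := ⟨ht.1, lt_of_lt_of_le ht.2 hw₂v⟩
      have hrt := hbd t htv
      have hFr : F t (r t) = -(1/2) * (1 - 2 * M t / r t) := by
        simp only [hF_def]
        rw [hgid (r t) (by linarith [hrt.1]) (by linarith [hrt.2])]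
      exact ⟨hFr ▸ (hsol t (hsub htv)).2, trivial⟩
    · intro t ht
      exact ⟨hαODE t ⟨by linarith [ht.1], lt_of_lt_of_le ht.2 hw₂δ⟩, trivial⟩
    · rw [hα0]
  -- the extension
  set s' : Set ℝ := s ∪ Ioo (w - δ) w₂ with hs'_def
  set r' : ℝ → ℝ := fun u => if u ∈ s then r u else α u with hr'_def
  have hr'r : ∀ u ∈ s, r' u = r u := fun u hu => if_pos hu
  have hr'α : EqOn r' α (Ioo (w - δ) w₂) := by
    intro z hz
    by_cases hzs : z ∈ s
    · rw [hr'r z hzs]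
      exact hEq ⟨hIoi hzs, hz.2⟩
    · simp only [hr'_def, if_neg hzs]
  have hs'open : IsOpen s' := hs.union isOpen_Ioo
  have hs'conn : s'.OrdConnected := by
    constructor
    intro x hx y hy z hz
    by_cases hzi : z ∈ Ioo (w - δ) w₂
    · exact Or.inr hzi
    · rcases not_and_or.mp (fun h => hzi ⟨h.1, h.2⟩) with h | h
      · push_neg at h
        exfalso
        rcases hx with hxs | hxi
        · have := hIoi hxs
          simp only [mem_Ioi] at this
          have : u₁ < z := lt_of_lt_of_le this hz.1
          linarith
        · have : w - δ < z := lt_of_lt_of_le hxi.1 hz.1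
          linarith
      · push_neg at h
        left
        have hys : y ∈ s := by
          rcases hy with hys | hyi
          · exact hys
          · exfalso; have : z < w₂ := lt_of_le_of_lt hz.2 hyi.2; linarith
        exact hso.out hws hys ⟨by linarith, hz.2⟩
  have hcond : ∀ u ∈ s', 0 < r' u ∧ HasDerivAt r' (-(1/2) * (1 - 2 * M u / r' u)) u := by
    intro u hu
    rcases hu with hus | hui
    · have hev : r' =ᶠ[nhds u] r := eventually_of_mem (hs.mem_nhds hus) hr'r
      have hru : r' u = r u := hr'r u hus
      rw [hru]
      exact ⟨(hsol u hus).1, ((hsol u hus).2).congr_of_eventuallyEq hev⟩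
    · have hev : r' =ᶠ[nhds u] α := eventually_of_mem (isOpen_Ioo.mem_nhds hui) hr'α
      have hru : r' u = α u := hr'α hui
      have huIcc : u ∈ Icc (w - δ) (w + δ) :=
        ⟨hui.1.le, le_trans hui.2.le hw₂δ⟩
      have hαr := hαrange u huIcc
      have hd : HasDerivAt r' (F u (α u)) u :=
        (hαODE u ⟨hui.1, lt_of_lt_of_le hui.2 hw₂δ⟩).congr_of_eventuallyEq hev
      have hFα : F u (α u) = -(1/2) * (1 - 2 * M u / α u) := by
        simp only [hF_def]
        rw [hgid (α u) hαr.1 hαr.2]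
      rw [hru]
      exact ⟨by linarith [hαr.1], hFα ▸ hd⟩
  have hs'eq : s' = s :=
    hmaxP s' r' hs'open hs'conn subset_union_left hr'r hcond
  have hu₁s' : u₁ ∈ s' := Or.inr ⟨hwδ1, lt_of_lt_of_le (lt_min huv (by linarith)) (by
    apply min_le_min le_rfl; linarith)⟩
  rw [hs'eq] at hu₁s'
  exact hu₁ hu₁s'

/-- a maximal positive solution whose domain has a finite left endpoint
`u₁` must reach the curvature singularity there: `r(u) → 0` as `u → u₁⁺`. -/
theorem stmt17 (M : ℝ → ℝ) (Mminus : ℝ)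
    (hM : ContDiff ℝ (⊤ : ℕ∞) M) (hMsa : StrictAnti M) (hMpos : ∀ u, 0 < M u)
    (hMlimm : Tendsto M atBot (nhds Mminus)) (hMminus : 0 < Mminus)
    (hMlimp : Tendsto M atTop (nhds 0))
    (s : Set ℝ) (r : ℝ → ℝ) (hmax : IsMaxNullSol M s r)
    (u₁ : ℝ) (hglb : IsGLB s u₁) :
    Tendsto r (nhdsWithin u₁ (Ioi u₁)) (nhds 0) := by
  obtain ⟨hs, hso, hne, hsol, hmaxP⟩ := hmax
  have hmax' : IsMaxNullSol M s r := ⟨hs, hso, hne, hsol, hmaxP⟩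
  -- u₁ ∉ s
  have hu₁ : u₁ ∉ s := by
    intro h
    obtain ⟨η, hη, hball⟩ := Metric.isOpen_iff.mp hs u₁ h
    have hmem : u₁ - η/2 ∈ s := by
      apply hball
      rw [Metric.mem_ball, Real.dist_eq]
      rw [abs_of_nonpos (by linarith)]
      linarith
    have := hglb.1 hmem
    linarith
  have hIoi : s ⊆ Ioi u₁ := by
    intro x hx
    have h1 : u₁ ≤ x := hglb.1 hx
    rcases h1.lt_or_eq with h | h
    · exact h
    · exact absurd (h ▸ hx) hu₁
  obtain ⟨v, hvs⟩ := hne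
  have huv : u₁ < v := hIoi hvs
  have hsub : Ioo u₁ v ⊆ s := by
    intro u hu
    obtain ⟨z, hzs, hzu⟩ : ∃ z ∈ s, z < u := by
      by_contra h
      push_neg at h
      have : u ≤ u₁ := hglb.2 fun z hz => (h z hz)
      linarith [hu.1]
    exact hso.out hzs hvs ⟨hzu.le, hu.2.le⟩
  have hIoc : Ioc u₁ v ⊆ s := by
    intro u hu
    rcases hu.2.lt_or_eq with h | h
    · exact hsub ⟨hu.1, h⟩
    · exact h ▸ hvs
  have hMle : ∀ u, M u ≤ Mminus := fun u =>
    ge_of_tendsto hMlimm ((eventually_le_atBot u).mono fun z hz => hMsa.antitone hz)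
  -- upper bound on r
  set K : ℝ := r v + (v - u₁)/2 with hK_def
  have hK : ∀ u ∈ Ioo u₁ v, r u ≤ K := by
    intro u hu
    have hIccs : Icc u v ⊆ s := fun z hz => hIoc ⟨lt_of_lt_of_le hu.1 hz.1, hz.2⟩
    have hcont : ContinuousOn (fun z => r z + z/2) (Icc u v) := fun z hz =>
      (((hsol z (hIccs hz)).2.continuousAt).add ((continuousAt_id).div_const 2)).continuousWithinAt
    have hderiv : ∀ z ∈ interior (Icc u v), 0 < deriv (fun z => r z + z/2) z := by
      intro z hz
      rw [interior_Icc] at hz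
      have hzs : z ∈ s := hIccs (Ioo_subset_Icc_self hz)
      have hd : HasDerivAt (fun z => r z + z/2) (-(1/2) * (1 - 2 * M z / r z) + 1/2) z :=
        (hsol z hzs).2.add ((hasDerivAt_id z).div_const 2)
      rw [hd.deriv]
      have hrz := (hsol z hzs).1
      have hMz := hMpos z
      have : -(1/2) * (1 - 2 * M z / r z) + 1/2 = M z / r z := by field_simp; ring
      rw [this]
      positivity
    have hmono := strictMonoOn_of_deriv_pos (convex_Icc u v) hcont hderiv
    have := hmono ⟨le_rfl, hu.2.le⟩ ⟨hu.2.le, le_rfl⟩ hu.2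
    simp only [hK_def] at *
    have := hu.1
    linarith
  set c : ℝ := 2 * M v with hc_def
  have hc : 0 < c := by have := hMpos v; simp only [hc_def]; linarith
  by_cases hA : ∀ u ∈ Ioo u₁ v, c ≤ r u
  · exact (extendFalse M Mminus hMminus hM.continuous hMpos hMle s r hmax' u₁ v hu₁ huv hsub
      hIoi hvs c K hc (fun u hu => ⟨hA u hu, hK u hu⟩)).elim
  push_neg at hA
  obtain ⟨u0, hu0, hu0c⟩ := hA
  -- r < c on (u₁, u0)
  have hlt : ∀ z ∈ Ioo u₁ u0, r z < c := by
    by_contra h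
    push_neg at h
    obtain ⟨z, hz, hcz⟩ := h
    set A : Set ℝ := {t ∈ Icc z u0 | c ≤ r t} with hA_def
    have hIccsub : Icc z u0 ⊆ s := fun t ht =>
      hsub ⟨lt_of_lt_of_le hz.1 ht.1, lt_of_le_of_lt ht.2 hu0.2⟩
    have hrcont : ContinuousOn r (Icc z u0) := fun t ht =>
      ((hsol t (hIccsub ht)).2.continuousAt).continuousWithinAt
    have hAclosed : IsClosed A := by
      have : A = Icc z u0 ∩ r ⁻¹' (Ici c) := by
        ext t; simp [hA_def, And.comm]
      rw [this]
      exact hrcont.preimage_isClosed_of_isClosed isClosed_Icc isClosed_Ici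
    have hAne : A.Nonempty := ⟨z, ⟨le_rfl, hz.2.le⟩, hcz⟩
    have hAbdd : BddAbove A := (bddAbove_Icc (a := z) (b := u0)).mono (sep_subset _ _)
    set m : ℝ := sSup A with hm_def
    have hmA : m ∈ A := hAclosed.csSup_mem hAne hAbdd
    have hmu0 : m < u0 := lt_of_le_of_ne hmA.1.2 (by
      intro h
      rw [h] at hmA
      linarith [hmA.2])
    have hrm : c ≤ r m := hmA.2
    -- r < c on (m, u0]
    have hlt' : ∀ t, m < t → t ≤ u0 → r t < c := by
      intro t hmt htu0
      by_contra h
      push_neg at h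
      have : t ∈ A := ⟨⟨hmA.1.1.trans hmt.le, htu0⟩, h⟩
      have := le_csSup hAbdd this
      linarith
    -- strict mono on [m, u0]
    have hIccsub' : Icc m u0 ⊆ s := fun t ht => hIccsub ⟨hmA.1.1.trans ht.1, ht.2⟩
    have hcont' : ContinuousOn r (Icc m u0) := fun t ht =>
      ((hsol t (hIccsub' ht)).2.continuousAt).continuousWithinAt
    have hderiv' : ∀ t ∈ interior (Icc m u0), 0 < deriv r t := by
      intro t ht
      rw [interior_Icc] at ht
      have hts : t ∈ s := hIccsub' (Ioo_subset_Icc_self ht)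
      have hrt := (hsol t hts).1
      have hrtc : r t < c := hlt' t ht.1 ht.2.le
      have hMt : c < 2 * M t := by
        have : M v < M t := hMsa (ht.2.trans hu0.2)
        linarith
      rw [(hsol t hts).2.deriv]
      have h2 : 1 < 2 * M t / r t := by
        rw [lt_div_iff₀ hrt]
        linarith
      nlinarith
    have hmono := strictMonoOn_of_deriv_pos (convex_Icc m u0) hcont' hderiv'
    have := hmono ⟨le_rfl, hmu0.le⟩ ⟨hmu0.le, le_rfl⟩ hmu0
    linarith
  -- r monotone on (u₁, u0)
  have hmono : MonotoneOn r (Ioo u₁ u0) := by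
    have hconv : Convex ℝ (Ioo u₁ u0) := convex_Ioo _ _
    have hsub' : Ioo u₁ u0 ⊆ s := fun t ht => hsub ⟨ht.1, ht.2.trans hu0.2⟩
    have hcont : ContinuousOn r (Ioo u₁ u0) := fun t ht =>
      ((hsol t (hsub' ht)).2.continuousAt).continuousWithinAt
    have hderiv : ∀ t ∈ interior (Ioo u₁ u0), 0 < deriv r t := by
      intro t ht
      rw [interior_Ioo] at ht
      have hts : t ∈ s := hsub' ht
      have hrt := (hsol t hts).1
      have hrtc : r t < c := hlt t ht
      have hMt : c < 2 * M t := by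
        have : M v < M t := hMsa (ht.2.trans hu0.2)
        linarith
      rw [(hsol t hts).2.deriv]
      have h2 : 1 < 2 * M t / r t := by
        rw [lt_div_iff₀ hrt]
        linarith
      nlinarith
    exact (strictMonoOn_of_deriv_pos hconv hcont hderiv).monotoneOn
  have hne' : (Ioo u₁ u0).Nonempty := nonempty_Ioo.mpr hu0.1
  have hsub' : Ioo u₁ u0 ⊆ s := fun t ht => hsub ⟨ht.1, ht.2.trans hu0.2⟩
  have hbdd : BddBelow (r '' Ioo u₁ u0) := by
    refine ⟨0, fun y hy => ?_⟩
    obtain ⟨t, ht, rfl⟩ := hy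
    exact ((hsol t (hsub' ht)).1).le
  have htend := hmono.tendsto_nhdsWithin_Ioo_right hne' hbdd
  set Linf : ℝ := sInf (r '' Ioo u₁ u0) with hLinf_def
  have hL0 : 0 ≤ Linf := by
    apply le_csInf (hne'.image r)
    intro y hy
    obtain ⟨t, ht, rfl⟩ := hy
    exact ((hsol t (hsub' ht)).1).le
  rcases hL0.lt_or_eq with hLpos | hLzero
  · -- extension contradiction
    have hu0s : u0 ∈ s := hsub hu0
    have hKbd : ∀ u ∈ Ioo u₁ u0, r u ∈ Icc Linf K := by
      intro u hu
      refine ⟨csInf_le hbdd (mem_image_of_mem r hu), hK u ⟨hu.1, hu.2.trans hu0.2⟩⟩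
    exact (extendFalse M Mminus hMminus hM.continuous hMpos hMle s r hmax' u₁ u0 hu₁ hu0.1
      hsub' hIoi hu0s Linf K hLpos hKbd).elim
  · rw [← hLzero] at htend
    exact htend
end

section
/- Let M be continuous, positive, with M(u) → M₊ > 0 as u → +∞. If r is a positive solution of ṙ(u) = -(1/2)(1 - 2M(u)/r(u)) defined on (u₀, +∞) which is increasing and satisfies r(u) < 2M(u) on its whole domain, then r(u) → 2M₊ as u → +∞. -/
/-! A monotone solution trapped below `2M`, with `M` convergent, is bounded and so converges to
some `l > 0`. The right-hand side of the ODE then converges to `-(1/2)(1 - 2M₊/l)`, and a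
derivative with a nonzero limit would make `r` grow linearly; hence that limit is `0`, i.e.
`l = 2M₊`. -/

open Set Filter Topology

theorem MonotoneOn.tendsto_atTop_Ioi {ι α : Type*} [LinearOrder ι] [NoMaxOrder ι]
    [TopologicalSpace α] [ConditionallyCompleteLinearOrder α] [OrderTopology α]
    {f : ι → α} {a : ι} (hf : MonotoneOn f (Ioi a)) :
    Tendsto f atTop atTop ∨ ∃ l, Tendsto f atTop (𝓝 l) ∧ ∀ x ∈ Ioi a, f x ≤ l := by
  have : Nonempty ι := ⟨a⟩
  obtain ⟨b, hab⟩ := exists_gt a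
  have hmono : Monotone (fun x ↦ f (max x b)) := fun x y hxy ↦
    hf (lt_of_lt_of_le hab (le_max_right x b)) (lt_of_lt_of_le hab (le_max_right y b))
      (max_le_max_right b hxy)
  have hfg : (fun x ↦ f (max x b)) =ᶠ[atTop] f :=
    (eventually_ge_atTop b).mono fun x hx ↦ congrArg f (max_eq_left hx)
  refine (tendsto_atTop_of_monotone hmono).imp (fun h ↦ h.congr' hfg) fun ⟨l, hl⟩ ↦
    ⟨l, hl.congr' hfg, fun x hx ↦ ge_of_tendsto (hl.congr' hfg) ?_⟩
  filter_upwards [eventually_ge_atTop x] with y hxy using hf hx (lt_of_lt_of_le hx hxy) hxy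

theorem tendsto_atTop_of_hasDerivAt_ge {f f' : ℝ → ℝ} {δ : ℝ} (hδ : 0 < δ)
    (hf : ∀ᶠ x in atTop, HasDerivAt f (f' x) x) (hf' : ∀ᶠ x in atTop, δ ≤ f' x) :
    Tendsto f atTop atTop := by
  obtain ⟨U, hU⟩ := eventually_atTop.1 (hf.and hf')
  have hgrowth : ∀ x ∈ Ici U, δ * (x - U) ≤ f x - f U := by
    refine fun x hx ↦ (convex_Ici U).mul_sub_le_image_sub_of_le_deriv
      (fun y hy ↦ (hU y hy).1.continuousAt.continuousWithinAt)
      (fun y hy ↦ (hU y (interior_subset hy)).1.differentiableAt.differentiableWithinAt)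
      (fun y hy ↦ (hU y (interior_subset hy)).1.deriv ▸ (hU y (interior_subset hy)).2)
      U self_mem_Ici x hx hx
  refine tendsto_atTop_mono' _ ?_ (tendsto_atTop_add_const_right _ (f U)
    ((tendsto_atTop_add_const_right _ (-U) tendsto_id).const_mul_atTop hδ))
  filter_upwards [eventually_ge_atTop U] with x hx
  simp only [id]
  linarith [hgrowth x hx]

theorem nonpos_of_tendsto_of_tendsto_deriv {f f' : ℝ → ℝ} {l c : ℝ}
    (hf : Tendsto f atTop (𝓝 l)) (hderiv : ∀ᶠ x in atTop, HasDerivAt f (f' x) x)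
    (hf' : Tendsto f' atTop (𝓝 c)) : c ≤ 0 :=
  not_lt.1 fun hc ↦ not_tendsto_atTop_of_tendsto_nhds hf <|
    tendsto_atTop_of_hasDerivAt_ge (half_pos hc) hderiv
      (hf'.eventually (eventually_ge_nhds (half_lt_self hc)))

theorem eq_zero_of_tendsto_of_tendsto_deriv {f f' : ℝ → ℝ} {l c : ℝ}
    (hf : Tendsto f atTop (𝓝 l)) (hderiv : ∀ᶠ x in atTop, HasDerivAt f (f' x) x)
    (hf' : Tendsto f' atTop (𝓝 c)) : c = 0 :=
  le_antisymm (nonpos_of_tendsto_of_tendsto_deriv hf hderiv hf') <| neg_nonpos.1 <|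
    nonpos_of_tendsto_of_tendsto_deriv hf.neg (hderiv.mono fun _ h ↦ h.neg) hf'.neg

theorem stmt18_general (M r : ℝ → ℝ) (u₀ Mplus : ℝ)
    (hMlim : Tendsto M atTop (nhds Mplus))
    (hpos : ∀ u ∈ Ioi u₀, 0 < r u)
    (hode : ∀ u ∈ Ioi u₀, HasDerivAt r (-(1/2) * (1 - 2 * M u / r u)) u)
    (hmono : MonotoneOn r (Ioi u₀))
    (htrap : ∀ u ∈ Ioi u₀, r u < 2 * M u) :
    Tendsto r atTop (nhds (2 * Mplus)) := by
  have hr_le : r ≤ᶠ[atTop] fun u ↦ 2 * M u :=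
    (eventually_gt_atTop u₀).mono fun u hu ↦ (htrap u hu).le
  obtain ⟨l, hrl, hle⟩ := hmono.tendsto_atTop_Ioi.resolve_left fun htop ↦
    not_tendsto_atTop_of_tendsto_nhds (hMlim.const_mul 2) (tendsto_atTop_mono' _ hr_le htop)
  have hl : 0 < l := (hpos _ (lt_add_one u₀)).trans_le (hle _ (lt_add_one u₀))
  have hslope := eq_zero_of_tendsto_of_tendsto_deriv hrl
    ((eventually_gt_atTop u₀).mono hode)
    (((hMlim.const_mul 2).div hrl hl.ne').const_sub 1 |>.const_mul (-(1/2)))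
  have hl_eq : l = 2 * Mplus := by
    field_simp at hslope
    linarith
  rwa [← hl_eq]

/-- an increasing positive solution of the null geodesic ODE on
`(u₀, +∞)` trapped below `2M(u)` tends to `2M₊` at `+∞`. -/
theorem stmt18 (M r : ℝ → ℝ) (u₀ Mplus : ℝ)
    (hMcont : Continuous M) (hMpos : ∀ u, 0 < M u)
    (hMlim : Tendsto M atTop (nhds Mplus)) (hMplus : 0 < Mplus)
    (hpos : ∀ u ∈ Ioi u₀, 0 < r u)
    (hode : ∀ u ∈ Ioi u₀, HasDerivAt r (-(1/2) * (1 - 2 * M u / r u)) u)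
    (hmono : MonotoneOn r (Ioi u₀))
    (htrap : ∀ u ∈ Ioi u₀, r u < 2 * M u) :
    Tendsto r atTop (nhds (2 * Mplus)) :=
  stmt18_general M r u₀ Mplus hMlim hpos hode hmono htrap
end
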